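/- Fix m ∈ ℕ and real numbers s₁,…,s_m, t₁,…,t_m, and use the matrix conventions of the context. If m' > m, then for any β¹,…,β^{m'} ∈ ℕ² the ordered matrix product M_{β¹} · M_{β²} ⋯ M_{β^{m'}} of (m+1)×(m+1) matrices is the zero matrix. -/

import Mathlib

/-!
Every `M_β` is strictly upper triangular: `ad E` and `ad (F - J)` are brackets with upper
triangular matrices, so they preserve strict upper triangularity, and the first bracket
`⁅F - J, E⁆ = ⁅E, J⁆` is strictly upper triangular because the diagonal matrices `E` and `F`
commute. A product of `m'` strictly upper triangular matrices vanishes below the `m'`-th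
superdiagonal, which for `m' > m` is everything in size `m + 1`.
-/

/-- The diagonal matrix `E` with `E_{ii} = s₁ + ⋯ + s_i` (so `E_{00} = 0`). -/
noncomputable def Emat (m : ℕ) (s : ℕ → ℝ) : Matrix (Fin (m + 1)) (Fin (m + 1)) ℝ :=
  Matrix.diagonal fun i => ∑ p ∈ Finset.Icc 1 (i : ℕ), s p

/-- The diagonal matrix `F` with `F_{ii} = t_{i+1} + ⋯ + t_m` (so `F_{mm} = 0`). -/
noncomputable def Fmat (m : ℕ) (t : ℕ → ℝ) : Matrix (Fin (m + 1)) (Fin (m + 1)) ℝ :=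
  Matrix.diagonal fun i => ∑ p ∈ Finset.Icc ((i : ℕ) + 1) m, t p

/-- The nilpotent Jordan matrix `J` with `J_{i,i+1} = 1` and all other entries `0`. -/
def Jmat (m : ℕ) : Matrix (Fin (m + 1)) (Fin (m + 1)) ℝ :=
  Matrix.of fun i j => if (j : ℕ) = (i : ℕ) + 1 then 1 else 0

/-- `M_β := (ad E)^{β₁} ((ad (F − J))^{β₂+1} (E))`, where `⁅A, B⁆ = A·B − B·A`. -/
noncomputable def Mmat (m : ℕ) (s t : ℕ → ℝ) (β₁ β₂ : ℕ) :
    Matrix (Fin (m + 1)) (Fin (m + 1)) ℝ :=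
  (fun B => ⁅Emat m s, B⁆)^[β₁] ((fun B => ⁅Fmat m t - Jmat m, B⁆)^[β₂ + 1] (Emat m s))

namespace Matrix

variable {n : ℕ} {R : Type*}

/-- `A` vanishes below its `k`-th superdiagonal: upper triangular for `k = 0`, strictly upper
triangular for `k = 1`. -/
def IsUpperFrom [Zero R] (k : ℕ) (A : Matrix (Fin n) (Fin n) R) : Prop :=
  ∀ i j : Fin n, (j : ℕ) < i + k → A i j = 0

namespace IsUpperFrom

theorem eq_zero [Zero R] {k : ℕ} {A : Matrix (Fin n) (Fin n) R} (hA : IsUpperFrom k A)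
    (hk : n ≤ k) : A = 0 :=
  ext fun i j => hA i j (by omega)

theorem sub [AddGroup R] {k : ℕ} {A B : Matrix (Fin n) (Fin n) R} (hA : IsUpperFrom k A)
    (hB : IsUpperFrom k B) : IsUpperFrom k (A - B) := fun i j hij => by
  rw [sub_apply, hA i j hij, hB i j hij, sub_zero]

theorem mul [NonUnitalNonAssocSemiring R] {a b : ℕ} {A B : Matrix (Fin n) (Fin n) R}
    (hA : IsUpperFrom a A) (hB : IsUpperFrom b B) : IsUpperFrom (a + b) (A * B) :=
  fun i j hij => by
    rw [mul_apply]
    refine Finset.sum_eq_zero fun l _ => ?_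
    by_cases hl : (l : ℕ) < i + a
    · rw [hA i l hl, zero_mul]
    · rw [hB l j (by omega), mul_zero]

theorem one [Zero R] [One R] : IsUpperFrom 0 (1 : Matrix (Fin n) (Fin n) R) :=
  fun i j hij => one_apply_ne fun h => by subst h; omega

theorem diagonal [Zero R] (d : Fin n → R) : IsUpperFrom 0 (diagonal d) :=
  fun i j hij => diagonal_apply_ne d fun h => by subst h; omega

theorem lie [Ring R] {a b : ℕ} {A B : Matrix (Fin n) (Fin n) R} (hA : IsUpperFrom a A)
    (hB : IsUpperFrom b B) : IsUpperFrom (a + b) ⁅A, B⁆ := by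
  rw [Ring.lie_def]
  exact (hA.mul hB).sub (add_comm a b ▸ hB.mul hA)

theorem list_prod [Semiring R] {L : List (Matrix (Fin n) (Fin n) R)}
    (hL : ∀ A ∈ L, IsUpperFrom 1 A) : IsUpperFrom L.length L.prod := by
  induction L with
  | nil => exact one
  | cons A L ih =>
    rw [List.prod_cons, List.length_cons, add_comm]
    exact (hL A List.mem_cons_self).mul (ih fun B hB => hL B (List.mem_cons_of_mem A hB))

end IsUpperFrom

end Matrix

open Matrix

theorem isUpperFrom_one_Jmat (m : ℕ) : IsUpperFrom 1 (Jmat m) := fun i j hij => by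
  simp only [Jmat, of_apply, ite_eq_right_iff]
  omega

theorem lie_Fmat_sub_Jmat_Emat (m : ℕ) (s t : ℕ → ℝ) :
    ⁅Fmat m t - Jmat m, Emat m s⁆ = ⁅Emat m s, Jmat m⁆ := by
  have hFE : Fmat m t * Emat m s = Emat m s * Fmat m t := (commute_diagonal _ _).eq
  rw [Ring.lie_def, Ring.lie_def, sub_mul, mul_sub, hFE]
  abel

theorem isUpperFrom_one_Mmat (m : ℕ) (s t : ℕ → ℝ) (β₁ β₂ : ℕ) :
    IsUpperFrom 1 (Mmat m s t β₁ β₂) := by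
  have hE : IsUpperFrom 0 (Emat m s) := IsUpperFrom.diagonal _
  have hFJ : IsUpperFrom 0 (Fmat m t - Jmat m) :=
    (IsUpperFrom.diagonal _).sub fun i j hij => isUpperFrom_one_Jmat m i j (by omega)
  have hfirst : IsUpperFrom 1 ⁅Fmat m t - Jmat m, Emat m s⁆ := by
    rw [lie_Fmat_sub_Jmat_Emat]
    exact hE.lie (isUpperFrom_one_Jmat m)
  unfold Mmat
  refine Function.Iterate.rec (IsUpperFrom 1) ?_ (fun B hB => hE.lie hB) β₁
  rw [Function.iterate_succ_apply]
  exact Function.Iterate.rec (IsUpperFrom 1) hfirst (fun B hB => hFJ.lie hB) β₂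

/-- If `m' > m`, then any ordered product `M_{β¹} ⋯ M_{β^{m'}}` of
`(m+1) × (m+1)` matrices is zero. -/
theorem Mmat_ordered_prod_eq_zero (m m' : ℕ) (hm : m < m') (s t : ℕ → ℝ)
    (β : Fin m' → ℕ × ℕ) :
    (List.ofFn fun p : Fin m' => Mmat m s t (β p).1 (β p).2).prod = 0 := by
  have hprod := IsUpperFrom.list_prod (L := List.ofFn fun p : Fin m' => Mmat m s t (β p).1 (β p).2)
    (by simpa only [List.forall_mem_ofFn_iff] using fun _ => isUpperFrom_one_Mmat m s t _ _)
  rw [List.length_ofFn] at hprod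
  exact hprod.eq_zero hm
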